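/- Let F ⊆ ℝ^d be a non-empty compact set, let Φ = {φ_i}_{i∈Λ} be a similarity IFS, and let T ∈ 𝒯'_Λ be a tree with no leaves such that F = Γ_Φ(T). Then (i) every miniset M of a member of cl(S_Φ^T) is contained in a microset of F; and (ii) if M has the form M = Q ∩ ψ(A) for some A ∈ cl(S_Φ^T) and an expanding similarity map ψ, and Φ satisfies the open set condition with an OSC set U such that ψ⁻¹(Q) ⊆ U, then M is a microset of F. -/

import Mathlib

open Metric Filter Set
open scoped ENNReal NNReal

noncomputable section

abbrev Euc (d : ℕ) : Type := EuclideanSpace ℝ (Fin d)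

/-- `f : ℝ^d → ℝ^d` is a similarity with scaling ratio `r`. -/
def IsSimilarityWithRatio {d : ℕ} (f : Euc d → Euc d) (r : ℝ) : Prop :=
  ∀ x y : Euc d, dist (f x) (f y) = r * dist x y

/-- `f` is a similarity map (with some positive scaling ratio). -/
def IsSimilarity {d : ℕ} (f : Euc d → Euc d) : Prop :=
  ∃ r : ℝ, 0 < r ∧ IsSimilarityWithRatio f r

/-- `f` is an expanding similarity map (scaling ratio `≥ 1`). -/
def IsExpandingSimilarity {d : ℕ} (f : Euc d → Euc d) : Prop :=
  ∃ r : ℝ, 1 ≤ r ∧ IsSimilarityWithRatio f r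

/-- `f` is a contracting similarity map with ratio `r ∈ (0,1)`. -/
def IsContractingSimilarity {d : ℕ} (f : Euc d → Euc d) (r : ℝ) : Prop :=
  0 < r ∧ r < 1 ∧ IsSimilarityWithRatio f r

/-- The closed unit cube `Q = [0,1]^d`. -/
def unitCube (d : ℕ) : Set (Euc d) := {x | ∀ i, x i ∈ Set.Icc (0:ℝ) 1}

/-- A miniset of `F`: a non-empty set of the form `Q ∩ ψ(F)` with `ψ` an expanding similarity. -/
def IsMiniset {d : ℕ} (F M : Set (Euc d)) : Prop :=
  M.Nonempty ∧ ∃ ψ : Euc d → Euc d, IsExpandingSimilarity ψ ∧ M = unitCube d ∩ ψ '' F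

/-- A microset of `F`: a limit of minisets of `F` in the Hausdorff metric. -/
def IsMicroset {d : ℕ} (F M : Set (Euc d)) : Prop :=
  IsCompact M ∧ M.Nonempty ∧ ∃ A : ℕ → Set (Euc d), (∀ n, IsMiniset F (A n)) ∧
    Tendsto (fun n => hausdorffDist (A n) M) atTop (nhds 0)

/-- A tree with alphabet `Λ`: a prefix-closed set of finite words containing the empty word. -/
def IsTree {Λ : Type} (T : Set (List Λ)) : Prop :=
  ([] : List Λ) ∈ T ∧ ∀ w ∈ T, ∀ v : List Λ, v <+: w → v ∈ T

/-- Every word of `T` has a one-letter extension in `T`. -/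
def HasNoLeaves {Λ : Type} (T : Set (List Λ)) : Prop :=
  ∀ w ∈ T, ∃ a : Λ, w ++ [a] ∈ T

/-- The boundary `∂T` of a tree: infinite words all of whose finite prefixes lie in `T`. -/
def treeBoundary {Λ : Type} (T : Set (List Λ)) : Set (ℕ → Λ) :=
  {x | ∀ n : ℕ, (List.ofFn fun i : Fin n => x i) ∈ T}

/-- The descendant tree `T^v = {w : vw ∈ T}`. -/
def descTree {Λ : Type} (T : Set (List Λ)) (v : List Λ) : Set (List Λ) :=
  {w | v ++ w ∈ T}

/-- The composition `φ_w = φ_{w₁} ∘ ⋯ ∘ φ_{w_k}` for a finite word `w`. -/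
def wordMap {X : Type} {Λ : Type} (Φ : Λ → X → X) (w : List Λ) : X → X :=
  fun z => w.foldr (fun a y => Φ a y) z

/-- The coding map `γ_Φ(i) = lim_n φ_{i₁} ∘ ⋯ ∘ φ_{iₙ}(0)`. -/
def codeMap {d : ℕ} {Λ : Type} (Φ : Λ → Euc d → Euc d) (x : ℕ → Λ) : Euc d :=
  limUnder atTop (fun n => wordMap Φ (List.ofFn fun i : Fin n => x i) 0)

/-- `Γ_Φ(T) = γ_Φ(∂T)`. -/
def treeProj {d : ℕ} {Λ : Type} (Φ : Λ → Euc d → Euc d) (T : Set (List Λ)) : Set (Euc d) :=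
  codeMap Φ '' treeBoundary T

/-- The collection `S_Φ^T = {Γ_Φ(T^v) : v ∈ T}`. -/
def branchSets {d : ℕ} {Λ : Type} (Φ : Λ → Euc d → Euc d) (T : Set (List Λ)) :
    Set (Set (Euc d)) :=
  {A | ∃ v ∈ T, A = treeProj Φ (descTree T v)}

/-- `A` belongs to the closure of `S_Φ^T` in the Hausdorff metric: `A` is a non-empty compact
set which is a Hausdorff-metric limit of a sequence of sets `Γ_Φ(T^{vₙ})`, `vₙ ∈ T`. -/
def inClosureBranchSets {d : ℕ} {Λ : Type} (Φ : Λ → Euc d → Euc d) (T : Set (List Λ))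
    (A : Set (Euc d)) : Prop :=
  IsCompact A ∧ A.Nonempty ∧ ∃ v : ℕ → List Λ, (∀ n, v n ∈ T) ∧
    Tendsto (fun n => hausdorffDist (treeProj Φ (descTree T (v n))) A) atTop (nhds 0)

/-- The scaling ratio `r_w = r_{w₁} ⋯ r_{w_k}` of a word. -/
def wordRatio {Λ : Type} (r : Λ → ℝ) (w : List Λ) : ℝ := (w.map r).prod

/-- The section `Π_ρ = {w : r_w ≤ ρ < r_{w₁⋯w_{|w|-1}}}`. -/
def sectionPi {Λ : Type} (r : Λ → ℝ) (ρ : ℝ) : Set (List Λ) :=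
  {w | wordRatio r w ≤ ρ ∧ ρ < wordRatio r w.dropLast}

/-- `r_min = min_{i ∈ Λ} r_i`. -/
def rMin {Λ : Type} [Fintype Λ] [Nonempty Λ] (r : Λ → ℝ) : ℝ :=
  Finset.univ.inf' Finset.univ_nonempty r

/-- The weak separation condition: there is `c ∈ ℕ` such that for every `ρ ∈ (0, r_min)`,
every closed ball of radius `ρ` intersects at most `c` distinct sets among
`{φ_w(K) : w ∈ Π_ρ}` (identical sets counted once). -/
def SatisfiesWSC {d : ℕ} {Λ : Type} [Fintype Λ] [Nonempty Λ] (Φ : Λ → Euc d → Euc d)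
    (r : Λ → ℝ) (K : Set (Euc d)) : Prop :=
  ∃ c : ℕ, ∀ ρ : ℝ, 0 < ρ → ρ < rMin r → ∀ x : Euc d,
    ∃ V : Finset (Set (Euc d)), V.card ≤ c ∧
      ∀ w ∈ sectionPi r ρ, (wordMap Φ w '' K ∩ closedBall x ρ).Nonempty →
        wordMap Φ w '' K ∈ V

/-- The strong separation condition. -/
def SatisfiesSSC {d : ℕ} {Λ : Type} (Φ : Λ → Euc d → Euc d) (K : Set (Euc d)) : Prop :=
  ∀ i j : Λ, i ≠ j → (Φ i '' K) ∩ (Φ j '' K) = ∅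

/-- `U` is an OSC set for `Φ`. -/
def IsOSCSet {d : ℕ} {Λ : Type} (Φ : Λ → Euc d → Euc d) (U : Set (Euc d)) : Prop :=
  U.Nonempty ∧ IsOpen U ∧ (∀ i, Φ i '' U ⊆ U) ∧
    ∀ i j : Λ, i ≠ j → (Φ i '' U) ∩ (Φ j '' U) = ∅

/-- The open set condition. -/
def SatisfiesOSC {d : ℕ} {Λ : Type} (Φ : Λ → Euc d → Euc d) : Prop :=
  ∃ U : Set (Euc d), IsOSCSet Φ U

/-- `K` is the attractor of the IFS `Φ`. -/
def IsAttractor {d : ℕ} {Λ : Type} (Φ : Λ → Euc d → Euc d) (K : Set (Euc d)) : Prop :=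
  IsCompact K ∧ K.Nonempty ∧ K = ⋃ i : Λ, Φ i '' K

/-!
An element `A` of `cl(S_Φ^T)` is a Hausdorff limit of sets `Γ(T^v)`, `v ∈ T`, and `φ_v` maps
`Γ(T^v)` into `F`. So `ψ ∘ φ_v⁻¹` blows a piece of `F` up onto `ψ(Γ(T^v))`, which is close to
`ψ(A)`; following it by a homothety that shrinks slightly towards the centre of `Q` (the ratio
stays `≥ 1` because `r_v < 1` for `v ≠ []`) gives minisets of `F` that come close to every point
of `M = Q ∩ ψ(A)`. A Blaschke-selection limit of these minisets is a microset containing `M`.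
Under the OSC with `ψ⁻¹(Q) ⊆ U`, every point of `F` in `φ_v(U)` already lies in `φ_v(Γ(T^v))`,
so the minisets also stay close to `ψ(A)`; compactness of `Q` then makes them converge to `M`.
When `A = F` the set `M` is itself a miniset of `F`.
-/

open Topology

section

variable {d : ℕ}

namespace IsSimilarityWithRatio

variable {f g : Euc d → Euc d} {r s : ℝ}

theorem lipschitzWith (hr : 0 ≤ r) (hf : IsSimilarityWithRatio f r) :
    LipschitzWith r.toNNReal f :=
  LipschitzWith.of_dist_le_mul fun x y => by rw [hf x y, Real.coe_toNNReal r hr]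

theorem continuous (hr : 0 ≤ r) (hf : IsSimilarityWithRatio f r) : Continuous f :=
  (hf.lipschitzWith hr).continuous

theorem comp (hf : IsSimilarityWithRatio f r) (hg : IsSimilarityWithRatio g s) :
    IsSimilarityWithRatio (f ∘ g) (r * s) := fun x y => by
  rw [Function.comp_apply, Function.comp_apply, hf, hg, mul_assoc]

theorem injective (hr : 0 < r) (hf : IsSimilarityWithRatio f r) : Function.Injective f :=
  fun x y hxy => dist_eq_zero.1 <| (mul_eq_zero.1 <| (hf x y).symm.trans
    (by rw [hxy, dist_self])).resolve_left hr.ne'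

theorem surjective (hr : 0 < r) (hf : IsSimilarityWithRatio f r) : Function.Surjective f := by
  have hiso : Isometry (r⁻¹ • f) := Isometry.of_dist_eq fun x y => by
    rw [Pi.smul_apply, Pi.smul_apply, dist_smul₀, hf, Real.norm_of_nonneg (inv_nonneg.2 hr.le),
      inv_mul_cancel_left₀ hr.ne']
  -- an isometry of a finite-dimensional Euclidean space is affine, hence bijective
  have hsurj := (hiso.affineIsometryOfStrictConvexSpace.toAffineIsometryEquiv rfl).surjective
  intro y
  obtain ⟨x, hx⟩ := hsurj (r⁻¹ • y)
  refine ⟨x, ?_⟩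
  have hx' : r⁻¹ • f x = r⁻¹ • y := hx
  exact smul_right_injective _ (inv_ne_zero hr.ne') hx'

theorem apply_invFun (hr : 0 < r) (hf : IsSimilarityWithRatio f r) (y : Euc d) :
    f (Function.invFun f y) = y :=
  Function.rightInverse_invFun (hf.surjective hr) y

theorem invFun_apply (hr : 0 < r) (hf : IsSimilarityWithRatio f r) (x : Euc d) :
    Function.invFun f (f x) = x :=
  Function.leftInverse_invFun (hf.injective hr) x

theorem invFun (hr : 0 < r) (hf : IsSimilarityWithRatio f r) :
    IsSimilarityWithRatio (Function.invFun f) r⁻¹ := fun x y => by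
  rw [eq_inv_mul_iff_mul_eq₀ hr.ne', ← hf, hf.apply_invFun hr, hf.apply_invFun hr]

theorem isOpenMap (hr : 0 < r) (hf : IsSimilarityWithRatio f r) : IsOpenMap f := fun V hV => by
  rw [Set.image_eq_preimage_of_inverse (hf.invFun_apply hr) (hf.apply_invFun hr)]
  exact hV.preimage ((hf.invFun hr).continuous (inv_nonneg.2 hr.le))

theorem isCompact_preimage (hr : 0 < r) (hf : IsSimilarityWithRatio f r) {K : Set (Euc d)}
    (hK : IsCompact K) : IsCompact (f ⁻¹' K) := by
  rw [← Set.image_eq_preimage_of_inverse (hf.apply_invFun hr) (hf.invFun_apply hr)]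
  exact hK.image ((hf.invFun hr).continuous (inv_nonneg.2 hr.le))

end IsSimilarityWithRatio

section Words

variable {Λ : Type} {Φ : Λ → Euc d → Euc d} {r : Λ → ℝ}

theorem wordMap_cons (a : Λ) (w : List Λ) : wordMap Φ (a :: w) = Φ a ∘ wordMap Φ w := rfl

theorem wordMap_append (v w : List Λ) : wordMap Φ (v ++ w) = wordMap Φ v ∘ wordMap Φ w := by
  funext z
  simp [wordMap, List.foldr_append]

theorem isSimilarityWithRatio_wordMap (hΦ : ∀ i, IsSimilarityWithRatio (Φ i) (r i)) :
    ∀ w : List Λ, IsSimilarityWithRatio (wordMap Φ w) (wordRatio r w)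
  | [] => fun x y => by simp [wordMap, wordRatio]
  | a :: w => by
    simpa [wordMap_cons, wordRatio] using (hΦ a).comp (isSimilarityWithRatio_wordMap hΦ w)

theorem mapsTo_wordMap {K : Set (Euc d)} (h : ∀ i, MapsTo (Φ i) K K) :
    ∀ w : List Λ, MapsTo (wordMap Φ w) K K
  | [] => mapsTo_id K
  | a :: w => (h a).comp (mapsTo_wordMap h w)

theorem wordRatio_pos (hr : ∀ i, 0 < r i) (w : List Λ) : 0 < wordRatio r w :=
  List.prod_pos fun _ hx => by
    obtain ⟨i, -, rfl⟩ := List.mem_map.1 hx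
    exact hr i

theorem wordRatio_le_pow {ρ : ℝ} (hr : ∀ i, 0 ≤ r i) (hρ : ∀ i, r i ≤ ρ) :
    ∀ w : List Λ, wordRatio r w ≤ ρ ^ w.length
  | [] => by simp [wordRatio]
  | a :: w => by
    have hw : 0 ≤ wordRatio r w := List.prod_nonneg fun _ hx => by
      obtain ⟨i, -, rfl⟩ := List.mem_map.1 hx
      exact hr i
    simpa [wordRatio, pow_succ'] using
      mul_le_mul (hρ a) (wordRatio_le_pow hr hρ w) hw ((hr a).trans (hρ a))

theorem wordRatio_le_of_ne_nil {ρ : ℝ} (hr : ∀ i, 0 ≤ r i) (hρ : ∀ i, r i ≤ ρ) (hρ1 : ρ ≤ 1)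
    {w : List Λ} (hw : w ≠ []) : wordRatio r w ≤ ρ :=
  (wordRatio_le_pow hr hρ w).trans <|
    pow_le_of_le_one (le_trans (hr (w.head hw)) (hρ _)) hρ1 (List.length_pos_iff.2 hw).ne'

end Words

section InfiniteWords

variable {Λ : Type}

def prefixWord (x : ℕ → Λ) (n : ℕ) : List Λ := List.ofFn fun i : Fin n => x i

def shiftWord (x : ℕ → Λ) (n : ℕ) : ℕ → Λ := fun k => x (n + k)

def prependWord (v : List Λ) (x : ℕ → Λ) : ℕ → Λ :=
  fun n => if h : n < v.length then v[n] else x (n - v.length)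

theorem length_prefixWord (x : ℕ → Λ) (n : ℕ) : (prefixWord x n).length = n :=
  List.length_ofFn

theorem wordRatio_prefixWord_le {r : Λ → ℝ} {ρ : ℝ} (hr : ∀ i, 0 ≤ r i) (hρ : ∀ i, r i ≤ ρ)
    (x : ℕ → Λ) (n : ℕ) : wordRatio r (prefixWord x n) ≤ ρ ^ n :=
  (wordRatio_le_pow hr hρ _).trans_eq (by rw [length_prefixWord])

theorem prefixWord_add (x : ℕ → Λ) (n m : ℕ) :
    prefixWord x (n + m) = prefixWord x n ++ prefixWord (shiftWord x n) m := by
  simp [prefixWord, shiftWord, List.ofFn_add]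

theorem prefixWord_succ (x : ℕ → Λ) (n : ℕ) : prefixWord x (n + 1) = prefixWord x n ++ [x n] := by
  rw [prefixWord_add]
  simp [prefixWord, shiftWord]

theorem prefixWord_prependWord_add (v : List Λ) (x : ℕ → Λ) (n : ℕ) :
    prefixWord (prependWord v x) (v.length + n) = v ++ prefixWord x n := by
  refine List.ext_getElem (by simp [length_prefixWord]) fun i h _ => ?_
  simp only [prefixWord, List.getElem_ofFn, prependWord, List.getElem_append]

theorem prefixWord_prependWord_of_le {v : List Λ} (x : ℕ → Λ) {n : ℕ} (hn : n ≤ v.length) :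
    prefixWord (prependWord v x) n = v.take n := by
  refine List.ext_getElem (by simp [length_prefixWord, hn]) fun i h _ => ?_
  rw [length_prefixWord] at h
  simp [prefixWord, prependWord, lt_of_lt_of_le h hn]

end InfiniteWords

section CodingMap

variable {Λ : Type} [Finite Λ] {Φ : Λ → Euc d → Euc d} {r : Λ → ℝ}
  (hΦ : ∀ i, IsContractingSimilarity (Φ i) (r i))
include hΦ

theorem exists_ratio_bound : ∃ ρ, 0 ≤ ρ ∧ ρ < 1 ∧ ∀ i, r i ≤ ρ := by
  cases isEmpty_or_nonempty Λ
  · exact ⟨0, le_rfl, one_pos, isEmptyElim⟩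
  · obtain ⟨j, hj⟩ := Finite.exists_max r
    exact ⟨r j, (hΦ j).1.le, (hΦ j).2.1, hj⟩

theorem cauchySeq_wordMap_prefixWord (x : ℕ → Λ) :
    CauchySeq fun n => wordMap Φ (prefixWord x n) 0 := by
  obtain ⟨ρ, -, hρ1, hρ⟩ := exists_ratio_bound hΦ
  obtain ⟨C, hC⟩ := (Set.finite_range fun i => dist (0 : Euc d) (Φ i 0)).bddAbove
  refine cauchySeq_of_le_geometric ρ C hρ1 fun n => ?_
  rw [prefixWord_succ, wordMap_append, Function.comp_apply,
    isSimilarityWithRatio_wordMap (fun i => (hΦ i).2.2), mul_comm]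
  exact mul_le_mul (hC ⟨_, rfl⟩) (wordRatio_prefixWord_le (fun i => (hΦ i).1.le) hρ x n)
    (wordRatio_pos (fun i => (hΦ i).1) _).le ((hC ⟨x n, rfl⟩).trans' dist_nonneg)

theorem tendsto_wordMap_prefixWord (x : ℕ → Λ) (z : Euc d) :
    Tendsto (fun n => wordMap Φ (prefixWord x n) z) atTop (𝓝 (codeMap Φ x)) := by
  obtain ⟨ρ, hρ0, hρ1, hρ⟩ := exists_ratio_bound hΦ
  obtain ⟨p, hp⟩ := cauchySeq_tendsto_of_complete (cauchySeq_wordMap_prefixWord hΦ x)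
  have hcode : codeMap Φ x = p := hp.limUnder_eq
  rw [hcode]
  refine tendsto_iff_dist_tendsto_zero.2 (squeeze_zero (fun _ => dist_nonneg)
    (fun n => dist_triangle _ (wordMap Φ (prefixWord x n) 0) p) ?_)
  have hzero : Tendsto (fun n => ρ ^ n * dist z 0) atTop (𝓝 0) := by
    simpa using (tendsto_pow_atTop_nhds_zero_of_lt_one hρ0 hρ1).mul_const (dist z 0)
  have hclose : Tendsto (fun n => dist (wordMap Φ (prefixWord x n) z)
      (wordMap Φ (prefixWord x n) 0)) atTop (𝓝 0) := by
    refine squeeze_zero (fun _ => dist_nonneg) (fun n => ?_) hzero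
    rw [isSimilarityWithRatio_wordMap (fun i => (hΦ i).2.2)]
    exact mul_le_mul_of_nonneg_right (wordRatio_prefixWord_le (fun i => (hΦ i).1.le) hρ x n)
      dist_nonneg
  simpa using hclose.add (tendsto_iff_dist_tendsto_zero.1 hp)

theorem codeMap_mem_of_mapsTo {K : Set (Euc d)} (hK : IsClosed K) (hKne : K.Nonempty)
    (hmaps : ∀ i, MapsTo (Φ i) K K) (x : ℕ → Λ) : codeMap Φ x ∈ K := by
  obtain ⟨z, hz⟩ := hKne
  exact hK.mem_of_tendsto (tendsto_wordMap_prefixWord hΦ x z)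
    (Eventually.of_forall fun n => mapsTo_wordMap hmaps _ hz)

theorem exists_mapsTo_closedBall :
    ∃ R, 0 ≤ R ∧ ∀ i, MapsTo (Φ i) (closedBall 0 R) (closedBall 0 R) := by
  obtain ⟨ρ, hρ0, hρ1, hρ⟩ := exists_ratio_bound hΦ
  obtain ⟨C, hC⟩ := (Set.finite_range fun i => dist (Φ i 0) 0).bddAbove
  have hC0 : 0 ≤ max C 0 := le_max_right _ _
  have hρ1' : 0 < 1 - ρ := sub_pos.2 hρ1
  refine ⟨max C 0 / (1 - ρ), by positivity, fun i y hy => ?_⟩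
  rw [mem_closedBall] at hy ⊢
  calc dist (Φ i y) 0 ≤ r i * dist y 0 + dist (Φ i 0) 0 := by
        rw [← (hΦ i).2.2]; exact dist_triangle _ _ _
    _ ≤ ρ * (max C 0 / (1 - ρ)) + max C 0 :=
        add_le_add (mul_le_mul (hρ i) hy dist_nonneg hρ0) ((hC ⟨i, rfl⟩).trans (le_max_left _ _))
    _ = max C 0 / (1 - ρ) := by field_simp; ring

theorem isBounded_treeProj (T : Set (List Λ)) : Bornology.IsBounded (treeProj Φ T) := by
  obtain ⟨R, hR, hmaps⟩ := exists_mapsTo_closedBall hΦ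
  refine (isBounded_closedBall (x := 0) (r := R)).subset (image_subset_iff.2 fun x _ => ?_)
  exact codeMap_mem_of_mapsTo hΦ isClosed_closedBall ⟨0, mem_closedBall_self hR⟩ hmaps x

theorem codeMap_eq_of_prefixWord_add {x y : ℕ → Λ} {v : List Λ}
    (h : ∀ n, prefixWord y (v.length + n) = v ++ prefixWord x n) :
    codeMap Φ y = wordMap Φ v (codeMap Φ x) := by
  have hy := (tendsto_add_atTop_iff_nat v.length).2 (tendsto_wordMap_prefixWord hΦ y 0)
  simp only [add_comm _ v.length, h, wordMap_append, Function.comp_apply] at hy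
  have hcont := (isSimilarityWithRatio_wordMap (fun i => (hΦ i).2.2) v).continuous
    (wordRatio_pos (fun i => (hΦ i).1) v).le
  exact tendsto_nhds_unique hy ((hcont.tendsto _).comp (tendsto_wordMap_prefixWord hΦ x 0))

theorem codeMap_prependWord (v : List Λ) (x : ℕ → Λ) :
    codeMap Φ (prependWord v x) = wordMap Φ v (codeMap Φ x) :=
  codeMap_eq_of_prefixWord_add hΦ (prefixWord_prependWord_add v x)

theorem codeMap_eq_wordMap_shiftWord (x : ℕ → Λ) (n : ℕ) :
    codeMap Φ x = wordMap Φ (prefixWord x n) (codeMap Φ (shiftWord x n)) :=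
  codeMap_eq_of_prefixWord_add hΦ fun m => by rw [length_prefixWord, prefixWord_add]

end CodingMap

section Trees

variable {Λ : Type} {T : Set (List Λ)}

theorem descTree_nil : descTree T [] = T := rfl

theorem HasNoLeaves.descTree (hT : HasNoLeaves T) (v : List Λ) : HasNoLeaves (descTree T v) :=
  fun w hw => (hT (v ++ w) hw).imp fun a ha => by
    rwa [_root_.descTree, mem_ofPred_eq, ← List.append_assoc]

theorem shiftWord_mem_treeBoundary {x : ℕ → Λ} (hx : x ∈ treeBoundary T) (n : ℕ) :
    shiftWord x n ∈ treeBoundary (descTree T (prefixWord x n)) := fun m => by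
  show prefixWord x n ++ prefixWord (shiftWord x n) m ∈ T
  rw [← prefixWord_add]
  exact hx (n + m)

theorem prependWord_mem_treeBoundary (hT : IsTree T) {v : List Λ} (hv : v ∈ T) {x : ℕ → Λ}
    (hx : x ∈ treeBoundary (descTree T v)) : prependWord v x ∈ treeBoundary T := fun n => by
  show prefixWord (prependWord v x) n ∈ T
  rcases le_or_gt n v.length with hn | hn
  · rw [prefixWord_prependWord_of_le x hn]
    exact hT.2 v hv _ (List.take_prefix n v)
  · obtain ⟨m, rfl⟩ := Nat.exists_eq_add_of_lt hn
    rw [add_assoc, prefixWord_prependWord_add]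
    exact hx (m + 1)

theorem treeBoundary_nonempty (h0 : [] ∈ T) (hT : HasNoLeaves T) : (treeBoundary T).Nonempty := by
  choose a ha using hT
  let grow : T → T := fun w => ⟨w.1 ++ [a w.1 w.2], ha w.1 w.2⟩
  let branch : ℕ → T := fun n => grow^[n] ⟨[], h0⟩
  have hbranch : ∀ n, prefixWord (fun k => a (branch k).1 (branch k).2) n = (branch n).1 := by
    intro n
    induction n with
    | zero => rfl
    | succ n ih =>
      rw [prefixWord_succ, ih]
      simp only [branch, Function.iterate_succ_apply', grow]
  refine ⟨fun k => a (branch k).1 (branch k).2, fun n => ?_⟩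
  have hmem := (branch n).2
  rw [← hbranch n] at hmem
  exact hmem

end Trees

section TreeProjection

variable {Λ : Type} {Φ : Λ → Euc d → Euc d} {T : Set (List Λ)}

theorem treeProj_descTree_nonempty (hnl : HasNoLeaves T) {v : List Λ}
    (hv : v ∈ T) : (treeProj Φ (descTree T v)).Nonempty :=
  (treeBoundary_nonempty (by simpa [descTree] using hv) (hnl.descTree v)).image _

variable [Finite Λ] {r : Λ → ℝ} (hΦ : ∀ i, IsContractingSimilarity (Φ i) (r i))
include hΦ

theorem wordMap_image_treeProj_descTree_subset (hT : IsTree T) {v : List Λ} (hv : v ∈ T) :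
    wordMap Φ v '' treeProj Φ (descTree T v) ⊆ treeProj Φ T := by
  rintro _ ⟨_, ⟨x, hx, rfl⟩, rfl⟩
  exact ⟨prependWord v x, prependWord_mem_treeBoundary hT hv hx, codeMap_prependWord hΦ v x⟩

end TreeProjection

section OpenSetCondition

variable {Λ : Type} {Φ : Λ → Euc d → Euc d} {r : Λ → ℝ} {U : Set (Euc d)}

theorem IsOSCSet.mapsTo (hU : IsOSCSet Φ U) (i : Λ) : MapsTo (Φ i) U U :=
  mapsTo_iff_image_subset.2 (hU.2.2.1 i)

variable (hΦ : ∀ i, IsContractingSimilarity (Φ i) (r i)) (hU : IsOSCSet Φ U)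
include hΦ hU

theorem IsOSCSet.mapsTo_closure (i : Λ) : MapsTo (Φ i) (closure U) (closure U) :=
  (hU.mapsTo i).closure ((hΦ i).2.2.continuous (hΦ i).1.le)

theorem IsOSCSet.disjoint_wordMap_image {v w : List Λ} (hlen : v.length = w.length)
    (hne : v ≠ w) : Disjoint (wordMap Φ v '' U) (wordMap Φ w '' closure U) := by
  induction v generalizing w with
  | nil => exact (hne (List.length_eq_zero_iff.1 hlen.symm).symm).elim
  | cons a v ih =>
    obtain ⟨b, w, rfl⟩ := List.exists_cons_of_length_eq_add_one hlen.symm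
    rw [wordMap_cons, wordMap_cons, image_comp, image_comp]
    by_cases hab : a = b
    · subst hab
      exact (disjoint_image_iff ((hΦ a).2.2.injective (hΦ a).1)).2
        (ih (Nat.succ.inj hlen) fun h => hne (h ▸ rfl))
    · have hopen : IsOpen (Φ a '' U) := (hΦ a).2.2.isOpenMap (hΦ a).1 U hU.2.1
      have hab' : Disjoint (Φ a '' U) (closure (Φ b '' U)) :=
        (disjoint_iff_inter_eq_empty.2 (hU.2.2.2 a b hab)).closure_right hopen
      refine hab'.mono (image_mono (mapsTo_wordMap hU.mapsTo v).image_subset) ?_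
      exact (image_mono (mapsTo_wordMap (hU.mapsTo_closure hΦ) w).image_subset).trans
        (image_closure_subset_closure_image ((hΦ b).2.2.continuous (hΦ b).1.le))

theorem IsOSCSet.treeProj_inter_wordMap_image_subset [Finite Λ] (T : Set (List Λ))
    (v : List Λ) : treeProj Φ T ∩ wordMap Φ v '' U ⊆ wordMap Φ v '' treeProj Φ (descTree T v) := by
  rintro _ ⟨⟨x, hx, rfl⟩, hxU⟩
  have hdecomp := codeMap_eq_wordMap_shiftWord hΦ x v.length
  have hprefix : prefixWord x v.length = v := by
    by_contra hne
    refine disjoint_left.1 (hU.disjoint_wordMap_image hΦ (length_prefixWord _ _).symm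
      (Ne.symm hne)) hxU ?_
    rw [hdecomp]
    exact mem_image_of_mem _
      (codeMap_mem_of_mapsTo hΦ isClosed_closure hU.1.closure (hU.mapsTo_closure hΦ) _)
  have hshift := shiftWord_mem_treeBoundary hx v.length
  rw [hprefix] at hdecomp hshift
  exact ⟨_, ⟨_, hshift, rfl⟩, hdecomp.symm⟩

end OpenSetCondition

section UnitCube

def cubeCenter (d : ℕ) : Euc d := WithLp.toLp 2 fun _ => (1 / 2 : ℝ)

theorem unitCube_eq_preimage_Icc :
    unitCube d = EuclideanSpace.equiv (Fin d) ℝ ⁻¹' Icc 0 1 := by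
  ext x
  simp [unitCube, Pi.le_def, forall_and]

theorem isCompact_unitCube : IsCompact (unitCube d) := by
  rw [unitCube_eq_preimage_Icc]
  exact (EuclideanSpace.equiv (Fin d) ℝ).toHomeomorph.isCompact_preimage.2 isCompact_Icc

theorem isClosed_unitCube : IsClosed (unitCube d) := isCompact_unitCube.isClosed

theorem dist_cubeCenter_le {x : Euc d} (hx : x ∈ unitCube d) : dist (cubeCenter d) x ≤ √d := by
  rw [EuclideanSpace.dist_eq]
  gcongr
  calc ∑ i, dist (cubeCenter d i) (x i) ^ 2 ≤ ∑ _i : Fin d, (1 : ℝ) :=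
        Finset.sum_le_sum fun i _ => by
          have := hx i
          rw [Real.dist_eq, sq_abs]
          simp only [cubeCenter]
          nlinarith [this.1, this.2]
    _ = d := by simp

theorem isSimilarityWithRatio_homothety (c : Euc d) {k : ℝ} (hk : 0 ≤ k) :
    IsSimilarityWithRatio (AffineMap.homothety c k) k := fun x y => by
  simp [AffineMap.homothety_apply, dist_smul₀, abs_of_nonneg hk]

theorem homothety_mem_unitCube {t : ℝ} (ht : 0 ≤ t) {m y : Euc d} (hm : m ∈ unitCube d)
    (hy : dist y m ≤ t) : AffineMap.homothety (cubeCenter d) (1 + 2 * t)⁻¹ y ∈ unitCube d := by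
  intro i
  have hyi : |y i - m i| ≤ t := (Real.dist_eq _ _ ▸ PiLp.dist_apply_le y m i).trans hy
  have hmi := hm i
  simp only [AffineMap.homothety_apply, vsub_eq_sub, vadd_eq_add, PiLp.add_apply,
    PiLp.smul_apply, PiLp.sub_apply, smul_eq_mul, cubeCenter, mem_Icc]
  rw [abs_le] at hyi
  have hpos : 0 < 1 + 2 * t := by linarith
  constructor <;>
  · rw [← sub_nonneg]
    field_simp
    nlinarith [hmi.1, hmi.2]

theorem dist_homothety_unitCube_le {t : ℝ} (ht : 0 ≤ t) {m y : Euc d} (hm : m ∈ unitCube d)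
    (hy : dist y m ≤ t) :
    dist m (AffineMap.homothety (cubeCenter d) (1 + 2 * t)⁻¹ y) ≤ t * (1 + 2 * t + 2 * √d) := by
  have hpos : 0 < 1 + 2 * t := by linarith
  have hk : ‖1 - (1 + 2 * t)⁻¹‖ ≤ 2 * t := by
    have hsub : 1 - (1 + 2 * t)⁻¹ = 2 * t / (1 + 2 * t) := by field_simp; ring
    rw [hsub, Real.norm_of_nonneg (by positivity)]
    exact div_le_self (by linarith) (by linarith)
  calc dist m (AffineMap.homothety (cubeCenter d) (1 + 2 * t)⁻¹ y)
      ≤ dist m y + dist (AffineMap.homothety (cubeCenter d) (1 + 2 * t)⁻¹ y) y :=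
        dist_triangle_right _ _ _
    _ ≤ t + 2 * t * (√d + t) := by
        rw [dist_homothety_self, dist_comm m]
        refine add_le_add hy (mul_le_mul hk ?_ dist_nonneg (by linarith))
        exact (dist_triangle _ m _).trans (add_le_add (dist_cubeCenter_le hm) (dist_comm y m ▸ hy))
    _ = t * (1 + 2 * t + 2 * √d) := by ring

theorem dist_homothety_self_unitCube_le {t : ℝ} (ht : 0 ≤ t) {x : Euc d} (hx : x ∈ unitCube d) :
    dist (AffineMap.homothety (cubeCenter d) (1 + 2 * t) x) x ≤ 2 * t * √d := by
  rw [dist_homothety_self, sub_add_cancel_left, norm_neg, Real.norm_of_nonneg (by linarith)]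
  exact mul_le_mul_of_nonneg_left (dist_cubeCenter_le hx) (by linarith)

theorem homothety_homothety_inv {t : ℝ} (ht : 0 ≤ t) (x : Euc d) :
    AffineMap.homothety (cubeCenter d) (1 + 2 * t)
      (AffineMap.homothety (cubeCenter d) (1 + 2 * t)⁻¹ x) = x := by
  rw [← AffineMap.homothety_mul_apply, mul_inv_cancel₀ (by linarith), AffineMap.homothety_one,
    AffineMap.id_apply]

end UnitCube

section HausdorffDistance

variable {α : Type*} [MetricSpace α]

theorem IsCompact.exists_subseq_tendsto_hausdorffDist {K : Set α} (hK : IsCompact K)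
    {N : ℕ → Set α} (hN : ∀ n, IsCompact (N n)) (hne : ∀ n, (N n).Nonempty)
    (hNK : ∀ n, N n ⊆ K) :
    ∃ L : Set α, IsCompact L ∧ L.Nonempty ∧ ∃ φ : ℕ → ℕ, StrictMono φ ∧
      Tendsto (fun k => hausdorffDist (N (φ k)) L) atTop (𝓝 0) := by
  let N' : ℕ → TopologicalSpace.NonemptyCompacts α := fun n => ⟨⟨N n, hN n⟩, hne n⟩
  obtain ⟨L, -, φ, hφ, hL⟩ :=
    (TopologicalSpace.NonemptyCompacts.isCompact_subsets_of_isCompact hK).tendsto_subseq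
      (x := N') hNK
  exact ⟨L, L.isCompact, L.nonempty, φ, hφ, tendsto_iff_dist_tendsto_zero.1 hL⟩

theorem IsCompact.exists_forall_infDist_inter_lt {K S : Set α} (hK : IsCompact K)
    (hS : IsClosed S) {ε : ℝ} (hε : 0 < ε) :
    ∃ δ > 0, ∀ x ∈ K, infDist x S < δ → infDist x (K ∩ S) < ε := by
  rcases S.eq_empty_or_nonempty with rfl | hSne
  · exact ⟨1, one_pos, fun x _ _ => by simpa using hε⟩
  have hfar : IsCompact {x ∈ K | ε ≤ infDist x (K ∩ S)} :=
    hK.inter_right (isClosed_le continuous_const (continuous_infDist_pt _))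
  have hdisj : Disjoint {x ∈ K | ε ≤ infDist x (K ∩ S)} S := disjoint_left.2 fun x hx hxS =>
    (hx.2.trans_eq (infDist_zero_of_mem ⟨hx.1, hxS⟩)).not_gt hε
  obtain ⟨δ, hδ, hd⟩ := hdisj.exists_cthickenings hfar hS
  refine ⟨δ, hδ, fun x hx hxS => not_le.1 fun hxfar => disjoint_left.1 hd
    (self_subset_cthickening _ ⟨hx, hxfar⟩) ?_⟩
  obtain ⟨y, hy, hxy⟩ := (infDist_lt_iff hSne).1 hxS
  exact mem_cthickening_of_dist_le x y δ S hy hxy.le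

end HausdorffDistance

section Microsets

theorem IsMiniset.subset_unitCube {F M : Set (Euc d)} (hM : IsMiniset F M) : M ⊆ unitCube d := by
  obtain ⟨-, ψ, -, rfl⟩ := hM
  exact inter_subset_left

theorem IsMiniset.isMicroset {F M : Set (Euc d)} (hF : IsCompact F) (hM : IsMiniset F M) :
    IsMicroset F M := by
  obtain ⟨hne, ψ, ⟨s, hs, hψ⟩, hMeq⟩ := hM
  have hMc : IsCompact M :=
    hMeq ▸ isCompact_unitCube.inter_right (hF.image (hψ.continuous (by linarith))).isClosed
  exact ⟨hMc, hne, fun _ => M, fun _ => ⟨hne, ψ, ⟨s, hs, hψ⟩, hMeq⟩, by simp⟩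

theorem exists_isMicroset_superset {F M : Set (Euc d)}
    (h : ∀ ε > 0, ∃ N, IsMiniset F N ∧ ∀ m ∈ M, ∃ p ∈ N, dist m p ≤ ε) :
    ∃ L, IsMicroset F L ∧ M ⊆ L := by
  choose N hN happrox using fun n : ℕ => h (1 / (n + 1)) Nat.one_div_pos_of_nat
  obtain ⟨L, hLc, hLne, φ, hφ, hL⟩ := isCompact_unitCube.exists_subseq_tendsto_hausdorffDist
    (fun n => isCompact_unitCube.of_isClosed_subset isClosed_closure
      (closure_minimal (hN n).subset_unitCube isClosed_unitCube))
    (fun n => (hN n).1.closure) (fun n => closure_minimal (hN n).subset_unitCube isClosed_unitCube)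
  simp only [hausdorffDist_closure₁] at hL
  refine ⟨L, ⟨hLc, hLne, N ∘ φ, fun k => hN (φ k), hL⟩, fun m hm => ?_⟩
  have hbound : ∀ k, infDist m L ≤ 1 / (φ k + 1) + hausdorffDist (N (φ k)) L := fun k => by
    obtain ⟨p, hp, hmp⟩ := happrox (φ k) m hm
    have hfin : hausdorffEDist (N (φ k)) L ≠ ⊤ := hausdorffEDist_ne_top_of_nonempty_of_bounded
      (hN (φ k)).1 hLne (isCompact_unitCube.isBounded.subset (hN (φ k)).subset_unitCube)
      hLc.isBounded
    calc infDist m L ≤ infDist p L + dist m p := infDist_le_infDist_add_dist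
      _ ≤ _ := by linarith [infDist_le_hausdorffDist_of_mem hp hfin]
  have hlim : Tendsto (fun k => 1 / ((φ k : ℝ) + 1) + hausdorffDist (N (φ k)) L) atTop (𝓝 0) := by
    simpa using (tendsto_one_div_add_atTop_nhds_zero_nat.comp hφ.tendsto_atTop).add hL
  exact (hLc.isClosed.mem_iff_infDist_zero hLne).2 <|
    le_antisymm (ge_of_tendsto' hlim hbound) infDist_nonneg

theorem isMicroset_inter_of_approx {F S : Set (Euc d)} (hS : IsClosed S)
    (hne : (unitCube d ∩ S).Nonempty)
    (h : ∀ ε > 0, ∃ N, IsMiniset F N ∧ (∀ m ∈ unitCube d ∩ S, ∃ p ∈ N, dist m p ≤ ε) ∧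
      ∀ x ∈ N, infDist x S ≤ ε) :
    IsMicroset F (unitCube d ∩ S) := by
  choose N hN happrox hnear using fun n : ℕ => h (1 / (n + 1)) Nat.one_div_pos_of_nat
  refine ⟨isCompact_unitCube.inter_right hS, hne, N, hN, Metric.tendsto_atTop.2 fun ε hε => ?_⟩
  obtain ⟨δ, hδ, hδS⟩ := isCompact_unitCube.exists_forall_infDist_inter_lt hS (half_pos hε)
  obtain ⟨n₀, hn₀⟩ := exists_nat_one_div_lt (lt_min hδ (half_pos hε))
  refine ⟨n₀, fun n hn => ?_⟩
  have hsmall : 1 / ((n : ℝ) + 1) < min δ (ε / 2) :=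
    lt_of_le_of_lt (Nat.one_div_le_one_div hn) hn₀
  rw [Real.dist_0_eq_abs, abs_of_nonneg hausdorffDist_nonneg]
  refine lt_of_le_of_lt (hausdorffDist_le_of_mem_dist (half_pos hε).le (fun x hx => ?_)
    fun m hm => ?_) (half_lt_self hε)
  · obtain ⟨y, hy, hxy⟩ := (infDist_lt_iff hne).1 <| hδS x ((hN n).subset_unitCube hx)
      ((hnear n x hx).trans_lt (hsmall.trans_le (min_le_left _ _)))
    exact ⟨y, hy, hxy.le⟩
  · obtain ⟨p, hp, hmp⟩ := happrox n m hm
    exact ⟨p, hp, hmp.trans (hsmall.le.trans (min_le_right _ _))⟩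

end Microsets

section Zoom

/-- The homothety of ratio `(1 + 2t)⁻¹` about the centre of `Q` pulls the `t`-neighbourhood of
`Q` into `Q`. -/
def zoomMap (ψ φ : Euc d → Euc d) (t : ℝ) : Euc d → Euc d :=
  AffineMap.homothety (cubeCenter d) (1 + 2 * t)⁻¹ ∘ ψ ∘ Function.invFun φ

variable {ψ φ : Euc d → Euc d} {s ρ t : ℝ}

theorem isExpandingSimilarity_zoomMap (hψ : IsSimilarityWithRatio ψ s) (hs : 1 ≤ s)
    (hφ : IsSimilarityWithRatio φ ρ) (hρ : 0 < ρ) (ht : 0 ≤ t) (hρt : (1 + 2 * t) * ρ ≤ 1) :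
    IsExpandingSimilarity (zoomMap ψ φ t) := by
  refine ⟨_, ?_, (isSimilarityWithRatio_homothety _ (by positivity)).comp
    (hψ.comp (hφ.invFun hρ))⟩
  rw [show (1 + 2 * t)⁻¹ * (s * ρ⁻¹) = s / ((1 + 2 * t) * ρ) by field_simp]
  exact (one_le_div (by positivity)).2 (hρt.trans hs)

theorem zoomMap_apply_apply (hφ : IsSimilarityWithRatio φ ρ) (hρ : 0 < ρ) (g : Euc d) :
    zoomMap ψ φ t (φ g) = AffineMap.homothety (cubeCenter d) (1 + 2 * t)⁻¹ (ψ g) := by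
  simp only [zoomMap, Function.comp_apply, hφ.invFun_apply hρ]

theorem homothety_zoomMap (ht : 0 ≤ t) (x : Euc d) :
    AffineMap.homothety (cubeCenter d) (1 + 2 * t) (zoomMap ψ φ t x) =
      ψ (Function.invFun φ x) := by
  simp only [zoomMap, Function.comp_apply, homothety_homothety_inv ht]

variable {Λ : Type} [Finite Λ] {Φ : Λ → Euc d → Euc d} {r : Λ → ℝ} {T : Set (List Λ)}
  {F A : Set (Euc d)} {v : List Λ}

theorem exists_mem_zoomMap_image_near (hΦ : ∀ i, IsContractingSimilarity (Φ i) (r i))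
    (hT : IsTree T) (hFT : F = treeProj Φ T) (hv : v ∈ T) (ht : 0 ≤ t)
    (hAΓ : ∀ a ∈ A, ∃ g ∈ treeProj Φ (descTree T v), dist (ψ g) (ψ a) ≤ t) :
    ∀ m ∈ unitCube d ∩ ψ '' A, ∃ p ∈ unitCube d ∩ zoomMap ψ (wordMap Φ v) t '' F,
      dist m p ≤ t * (1 + 2 * t + 2 * √d) := by
  rintro _ ⟨hmQ, a, ha, rfl⟩
  obtain ⟨g, hg, hga⟩ := hAΓ a ha
  refine ⟨_, ⟨homothety_mem_unitCube ht hmQ hga, wordMap Φ v g, ?_,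
    zoomMap_apply_apply (isSimilarityWithRatio_wordMap (fun i => (hΦ i).2.2) v)
      (wordRatio_pos (fun i => (hΦ i).1) v) g⟩, dist_homothety_unitCube_le ht hmQ hga⟩
  exact hFT ▸ wordMap_image_treeProj_descTree_subset hΦ hT hv (mem_image_of_mem _ hg)

theorem infDist_le_of_mem_zoomMap_image (hΦ : ∀ i, IsContractingSimilarity (Φ i) (r i))
    (hFT : F = treeProj Φ T) (hψ : IsSimilarityWithRatio ψ s) (hs : 1 ≤ s) (ht : 0 ≤ t)
    {U : Set (Euc d)} (hU : IsOSCSet Φ U)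
    (hthick : cthickening (2 * t * √d) (ψ ⁻¹' unitCube d) ⊆ U)
    (hΓA : ∀ g ∈ treeProj Φ (descTree T v), ∃ a ∈ A, dist (ψ g) (ψ a) ≤ t) :
    ∀ x ∈ unitCube d ∩ zoomMap ψ (wordMap Φ v) t '' F,
      infDist x (ψ '' A) ≤ t * (1 + 2 * t + 2 * √d) := by
  rintro _ ⟨hxQ, f, hf, rfl⟩
  have hs0 : 0 < s := one_pos.trans_le hs
  have hρ : 0 < wordRatio r v := wordRatio_pos (fun i => (hΦ i).1) v
  have hφ := isSimilarityWithRatio_wordMap (fun i => (hΦ i).2.2) v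
  set x := zoomMap ψ (wordMap Φ v) t f
  set z := Function.invFun (wordMap Φ v) f
  have hdist : dist (ψ z) x ≤ 2 * t * √d := by
    rw [← homothety_zoomMap (ψ := ψ) (φ := wordMap Φ v) ht f]
    exact dist_homothety_self_unitCube_le ht hxQ
  have hzU : z ∈ U := by
    have hy := hψ.apply_invFun hs0 x
    refine hthick (mem_cthickening_of_dist_le z (Function.invFun ψ x) _ _
      (by rwa [mem_preimage, hy]) ?_)
    calc dist z (Function.invFun ψ x) ≤ s * dist z (Function.invFun ψ x) :=
          le_mul_of_one_le_left dist_nonneg hs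
      _ = dist (ψ z) x := by rw [← hψ, hy]
      _ ≤ 2 * t * √d := hdist
  obtain ⟨g, hg, hgf⟩ := hU.treeProj_inter_wordMap_image_subset hΦ T v
    ⟨hFT ▸ hf, z, hzU, hφ.apply_invFun hρ f⟩
  have hgz : g = z := hφ.injective hρ (hgf.trans (hφ.apply_invFun hρ f).symm)
  obtain ⟨a, ha, hza⟩ := hΓA z (hgz ▸ hg)
  calc infDist x (ψ '' A) ≤ dist x (ψ a) := infDist_le_dist_of_mem (mem_image_of_mem ψ ha)
    _ ≤ dist (ψ z) x + dist (ψ z) (ψ a) := dist_triangle_left _ _ _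
    _ ≤ t * (1 + 2 * t + 2 * √d) := by nlinarith [Real.sqrt_nonneg d]

theorem exists_miniset_near_of_branch (hΦ : ∀ i, IsContractingSimilarity (Φ i) (r i))
    (hT : IsTree T) (hFT : F = treeProj Φ T) (hψ : IsSimilarityWithRatio ψ s) (hs : 1 ≤ s)
    (hv : v ∈ T) (ht : 0 ≤ t) (hvt : (1 + 2 * t) * wordRatio r v ≤ 1)
    (hAΓ : ∀ a ∈ A, ∃ g ∈ treeProj Φ (descTree T v), dist (ψ g) (ψ a) ≤ t)
    (hΓA : ∀ g ∈ treeProj Φ (descTree T v), ∃ a ∈ A, dist (ψ g) (ψ a) ≤ t)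
    (hM : (unitCube d ∩ ψ '' A).Nonempty) :
    ∃ N, IsMiniset F N ∧
      (∀ m ∈ unitCube d ∩ ψ '' A, ∃ p ∈ N, dist m p ≤ t * (1 + 2 * t + 2 * √d)) ∧
      ∀ U, IsOSCSet Φ U → cthickening (2 * t * √d) (ψ ⁻¹' unitCube d) ⊆ U →
        ∀ x ∈ N, infDist x (ψ '' A) ≤ t * (1 + 2 * t + 2 * √d) := by
  have hinward := exists_mem_zoomMap_image_near hΦ hT hFT hv ht hAΓ
  obtain ⟨m, hm⟩ := hM
  obtain ⟨p, hp, -⟩ := hinward m hm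
  exact ⟨_, ⟨⟨p, hp⟩, _, isExpandingSimilarity_zoomMap hψ hs
      (isSimilarityWithRatio_wordMap (fun i => (hΦ i).2.2) v)
      (wordRatio_pos (fun i => (hΦ i).1) v) ht hvt, rfl⟩,
    hinward, fun U hU hthick => infDist_le_of_mem_zoomMap_image hΦ hFT hψ hs ht hU hthick hΓA⟩

end Zoom

section Approximation

variable {Λ : Type} {Φ : Λ → Euc d → Euc d} {r : Λ → ℝ} {T : Set (List Λ)}
  {F A : Set (Euc d)} {ψ : Euc d → Euc d} {s : ℝ}

theorem inClosureBranchSets.exists_ne_nil_hausdorffDist_lt (hFc : IsCompact F)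
    (hFne : F.Nonempty) (hFT : F = treeProj Φ T) (hA : inClosureBranchSets Φ T A) (hAF : A ≠ F)
    {ε : ℝ} (hε : 0 < ε) :
    ∃ v ∈ T, v ≠ [] ∧ hausdorffDist (treeProj Φ (descTree T v)) A < ε := by
  obtain ⟨hAc, hAne, v, hv, hlim⟩ := hA
  have hfreq : ∃ᶠ n in atTop, v n ≠ [] := by
    refine fun hev => hAF ((hFc.isClosed.hausdorffDist_zero_iff_eq hAc.isClosed
      (hausdorffEDist_ne_top_of_nonempty_of_bounded hFne hAne hFc.isBounded
        hAc.isBounded)).1 ?_).symm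
    refine tendsto_nhds_unique (tendsto_const_nhds.congr' ?_) hlim
    filter_upwards [hev] with n hn
    rw [not_not.1 hn, descTree_nil, ← hFT]
  obtain ⟨n, hn, hlt⟩ := (hfreq.and_eventually (hlim.eventually (gt_mem_nhds hε))).exists
  exact ⟨v n, hv n, hn, hlt⟩

theorem exists_miniset_near [Finite Λ] (hΦ : ∀ i, IsContractingSimilarity (Φ i) (r i))
    (hFc : IsCompact F) (hFne : F.Nonempty) (hT : IsTree T) (hTnl : HasNoLeaves T)
    (hFT : F = treeProj Φ T) (hA : inClosureBranchSets Φ T A) (hAF : A ≠ F)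
    (hψ : IsSimilarityWithRatio ψ s) (hs : 1 ≤ s) (hM : (unitCube d ∩ ψ '' A).Nonempty)
    {ε δ : ℝ} (hε : 0 < ε) (hδ : 0 < δ) :
    ∃ N, IsMiniset F N ∧ (∀ m ∈ unitCube d ∩ ψ '' A, ∃ p ∈ N, dist m p ≤ ε) ∧
      ∀ U, IsOSCSet Φ U → cthickening δ (ψ ⁻¹' unitCube d) ⊆ U →
        ∀ x ∈ N, infDist x (ψ '' A) ≤ ε := by
  have hs0 : 0 < s := one_pos.trans_le hs
  obtain ⟨ρ, -, hρ1, hρ⟩ := exists_ratio_bound hΦ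
  have hsmall : ∀ᶠ t in 𝓝[>] (0 : ℝ),
      (t * (1 + 2 * t + 2 * √d) < ε ∧ 2 * t * √d < δ ∧ (1 + 2 * t) * ρ < 1) ∧ 0 < t := by
    refine Filter.Eventually.and (nhdsWithin_le_nhds ?_) self_mem_nhdsWithin
    refine ((ContinuousAt.eventually_lt (by fun_prop) continuousAt_const (by simpa using hε)).and
      ((ContinuousAt.eventually_lt (by fun_prop) continuousAt_const (by simpa using hδ)).and
      (ContinuousAt.eventually_lt (by fun_prop) continuousAt_const (by simpa using hρ1))))
  obtain ⟨t, ⟨hηε, htδ, htρ⟩, ht⟩ := hsmall.exists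
  obtain ⟨v, hv, hvne, hvA⟩ := hA.exists_ne_nil_hausdorffDist_lt hFc hFne hFT hAF
    (div_pos ht hs0)
  have hfin : hausdorffEDist (treeProj Φ (descTree T v)) A ≠ ⊤ :=
    hausdorffEDist_ne_top_of_nonempty_of_bounded (treeProj_descTree_nonempty hTnl hv) hA.2.1
      (isBounded_treeProj hΦ _) hA.1.isBounded
  have hψdist : ∀ {g a}, dist g a < t / s → dist (ψ g) (ψ a) ≤ t := fun h => by
    rw [hψ]; exact ((lt_div_iff₀' hs0).1 h).le
  have hvt : (1 + 2 * t) * wordRatio r v ≤ 1 := le_trans (mul_le_mul_of_nonneg_left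
    (wordRatio_le_of_ne_nil (fun i => (hΦ i).1.le) hρ hρ1.le hvne) (by linarith)) htρ.le
  obtain ⟨N, hN, hin, hout⟩ := exists_miniset_near_of_branch hΦ hT hFT hψ hs hv ht.le hvt
    (fun a ha => (exists_dist_lt_of_hausdorffDist_lt' ha hvA hfin).imp fun _ h => ⟨h.1, hψdist h.2⟩)
    (fun g hg => (exists_dist_lt_of_hausdorffDist_lt hg hvA hfin).imp fun _ h => ⟨h.1, hψdist h.2⟩)
    hM
  exact ⟨N, hN, fun m hm => (hin m hm).imp fun _ h => ⟨h.1, h.2.trans hηε.le⟩,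
    fun U hU hδU x hx => (hout U hU ((cthickening_mono htδ.le _).trans hδU) x hx).trans hηε.le⟩

end Approximation

end

theorem stmt2_general {d : ℕ} {Λ : Type} [Fintype Λ]
    (Φ : Λ → Euc d → Euc d) (r : Λ → ℝ)
    (hΦ : ∀ i, IsContractingSimilarity (Φ i) (r i))
    (F : Set (Euc d)) (hFc : IsCompact F) (hFne : F.Nonempty)
    (T : Set (List Λ)) (hT : IsTree T) (hTnl : HasNoLeaves T)
    (hFT : F = treeProj Φ T) :
    (∀ A M : Set (Euc d), inClosureBranchSets Φ T A → IsMiniset A M →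
      ∃ L : Set (Euc d), IsMicroset F L ∧ M ⊆ L) ∧
    (∀ (A : Set (Euc d)) (ψ : Euc d → Euc d) (U : Set (Euc d)),
      inClosureBranchSets Φ T A → IsExpandingSimilarity ψ →
      (unitCube d ∩ ψ '' A).Nonempty → IsOSCSet Φ U → ψ ⁻¹' unitCube d ⊆ U →
      IsMicroset F (unitCube d ∩ ψ '' A)) := by
  refine ⟨fun A M hA hM => ?_, fun A ψ U hA hψ hM hU hQU => ?_⟩
  · obtain ⟨hMne, ψ, ⟨s, hs, hψ⟩, rfl⟩ := hM
    by_cases hAF : A = F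
    · subst hAF
      exact ⟨_, IsMiniset.isMicroset hFc ⟨hMne, ψ, ⟨s, hs, hψ⟩, rfl⟩, subset_rfl⟩
    · exact exists_isMicroset_superset fun ε hε =>
        (exists_miniset_near hΦ hFc hFne hT hTnl hFT hA hAF hψ hs hMne hε one_pos).imp
          fun _ hN => ⟨hN.1, hN.2.1⟩
  · obtain ⟨s, hs, hψ⟩ := hψ
    by_cases hAF : A = F
    · subst hAF
      exact IsMiniset.isMicroset hFc ⟨hM, ψ, ⟨s, hs, hψ⟩, rfl⟩
    · obtain ⟨δ, hδ, hδU⟩ := (hψ.isCompact_preimage (one_pos.trans_le hs)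
        isCompact_unitCube).exists_cthickening_subset_open hU.2.1 hQU
      refine isMicroset_inter_of_approx (hA.1.image (hψ.continuous (by linarith))).isClosed hM
        fun ε hε => ?_
      obtain ⟨N, hN, hin, hout⟩ :=
        exists_miniset_near hΦ hFc hFne hT hTnl hFT hA hAF hψ hs hM hε hδ
      exact ⟨N, hN, hin, hout U hU hδU⟩

theorem stmt2 {d : ℕ} {Λ : Type} [Fintype Λ] [Nonempty Λ]
    (Φ : Λ → Euc d → Euc d) (r : Λ → ℝ)
    (hΦ : ∀ i, IsContractingSimilarity (Φ i) (r i))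
    (F : Set (Euc d)) (hFc : IsCompact F) (hFne : F.Nonempty)
    (T : Set (List Λ)) (hT : IsTree T) (hTnl : HasNoLeaves T)
    (hFT : F = treeProj Φ T) :
    (∀ A M : Set (Euc d), inClosureBranchSets Φ T A → IsMiniset A M →
      ∃ L : Set (Euc d), IsMicroset F L ∧ M ⊆ L) ∧
    (∀ (A : Set (Euc d)) (ψ : Euc d → Euc d) (U : Set (Euc d)),
      inClosureBranchSets Φ T A → IsExpandingSimilarity ψ →
      (unitCube d ∩ ψ '' A).Nonempty → IsOSCSet Φ U → ψ ⁻¹' unitCube d ⊆ U →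
      IsMicroset F (unitCube d ∩ ψ '' A)) :=
  stmt2_general Φ r hΦ F hFc hFne T hT hTnl hFT
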